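/- Let Ω be a potential maximal clique of a graph G. Then a subset S ⊆ Ω is a minimal separator of G if and only if S is the neighborhood N(C) of some connected component C of the graph G − Ω obtained by deleting Ω from G. -/

import Mathlib

/-! Common definitions: chordality, (minimal) triangulations, potential maximal cliques,
minimal separators, tree decompositions and treewidth, minors and minor models,
planarity (via Wagner's characterization), circle and circular-arc graphs, grids. -/

/-- A chord of a closed walk `c` in `G`: an edge of `G` between two vertices of the walk
that is not an edge of the walk (i.e. joining two nonconsecutive vertices of a cycle). -/
def HasChord {V : Type} (G : SimpleGraph V) {v : V} (c : G.Walk v v) : Prop :=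
  ∃ u w : V, u ∈ c.support ∧ w ∈ c.support ∧ G.Adj u w ∧ s(u, w) ∉ c.edges

/-- A graph is chordal if every cycle of length at least four has a chord. -/
def Chordal {V : Type} (G : SimpleGraph V) : Prop :=
  ∀ (v : V) (c : G.Walk v v), c.IsCycle → 4 ≤ c.length → HasChord G c

/-- `H` is a triangulation of `G`: a chordal supergraph of `G` on the same vertex set. -/
def IsTriangulation {V : Type} (G H : SimpleGraph V) : Prop :=
  G ≤ H ∧ Chordal H

/-- `H` is a minimal triangulation of `G`: no proper subgraph of `H` containing `G`
is chordal. -/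
def IsMinimalTriangulation {V : Type} (G H : SimpleGraph V) : Prop :=
  IsTriangulation G H ∧ ∀ H' : SimpleGraph V, G ≤ H' → H' < H → ¬ Chordal H'

/-- A maximal clique: a clique contained in no strictly larger clique. -/
def IsMaxClique {V : Type} (G : SimpleGraph V) (S : Set V) : Prop :=
  G.IsClique S ∧ ∀ T : Set V, G.IsClique T → S ⊆ T → T = S

/-- A potential maximal clique of `G`: a maximal clique of some minimal triangulation of `G`. -/
def IsPotentialMaximalClique {V : Type} (G : SimpleGraph V) (Ω : Set V) : Prop :=
  ∃ H : SimpleGraph V, IsMinimalTriangulation G H ∧ IsMaxClique H Ω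

/-- `S` is a `u,v`-separator: `u, v ∉ S` and every walk from `u` to `v` meets `S`
(equivalently, `u` and `v` lie in different components of `G − S`). -/
def IsSeparator {V : Type} (G : SimpleGraph V) (u v : V) (S : Set V) : Prop :=
  u ∉ S ∧ v ∉ S ∧ ∀ p : G.Walk u v, ∃ x ∈ p.support, x ∈ S

/-- A minimal separator of `G`: a minimal `u,v`-separator for some nonadjacent pair `u ≠ v`. -/
def IsMinimalSeparator {V : Type} (G : SimpleGraph V) (S : Set V) : Prop :=
  ∃ u v : V, u ≠ v ∧ ¬ G.Adj u v ∧ IsSeparator G u v S ∧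
    ∀ S' : Set V, S' ⊂ S → ¬ IsSeparator G u v S'

/-- `(T, bag)` is a tree decomposition of `G`. -/
def IsTreeDecomposition {V ι : Type} (G : SimpleGraph V) (T : SimpleGraph ι)
    (bag : ι → Set V) : Prop :=
  T.IsTree ∧
  (∀ v : V, ∃ i, v ∈ bag i) ∧
  (∀ u v : V, G.Adj u v → ∃ i, u ∈ bag i ∧ v ∈ bag i) ∧
  (∀ v : V, (T.induce {i | v ∈ bag i}).Connected)

/-- `G` has a tree decomposition of width at most `k`. -/
def HasTreeDecompOfWidth {V : Type} (G : SimpleGraph V) (k : ℕ) : Prop :=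
  ∃ (ι : Type) (T : SimpleGraph ι) (bag : ι → Set V),
    IsTreeDecomposition G T bag ∧ ∀ i, (bag i).ncard ≤ k + 1

/-- The treewidth of `G`: the least width of a tree decomposition of `G`. -/
noncomputable def treewidth {V : Type} (G : SimpleGraph V) : ℕ :=
  sInf {k | HasTreeDecompOfWidth G k}

/-- `H` is a minor of `G` (branch-set formulation: nonempty pairwise disjoint connected
branch sets, with an edge of `G` between branch sets of adjacent vertices of `H`). -/
def IsMinorOf {W V : Type} (H : SimpleGraph W) (G : SimpleGraph V) : Prop :=
  ∃ B : W → Set V,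
    (∀ w, (B w).Nonempty) ∧
    (∀ w, (G.induce (B w)).Connected) ∧
    (∀ w₁ w₂ : W, w₁ ≠ w₂ → Disjoint (B w₁) (B w₂)) ∧
    (∀ w₁ w₂ : W, H.Adj w₁ w₂ → ∃ u ∈ B w₁, ∃ v ∈ B w₂, G.Adj u v)

/-- `M` is the vertex set of a minor model of `H` in `G`. -/
def IsMinorModel {W V : Type} (H : SimpleGraph W) (G : SimpleGraph V) (M : Set V) : Prop :=
  ∃ B : W → Set V,
    (∀ w, (B w).Nonempty) ∧
    (∀ w, (G.induce (B w)).Connected) ∧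
    (∀ w₁ w₂ : W, w₁ ≠ w₂ → Disjoint (B w₁) (B w₂)) ∧
    (∀ w₁ w₂ : W, H.Adj w₁ w₂ → ∃ u ∈ B w₁, ∃ v ∈ B w₂, G.Adj u v) ∧
    M = ⋃ w, B w

/-- Planarity, via Wagner's characterization: a finite simple graph is planar iff it has
neither `K₅` nor `K₃,₃` as a minor. -/
def IsPlanar {W : Type} (G : SimpleGraph W) : Prop :=
  ¬ IsMinorOf (SimpleGraph.completeGraph (Fin 5)) G ∧
  ¬ IsMinorOf (completeBipartiteGraph (Fin 3) (Fin 3)) G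

/-- A circle graph: an intersection graph of chords of the unit circle. -/
def IsCircleGraph {V : Type} (G : SimpleGraph V) : Prop :=
  ∃ a b : V → EuclideanSpace ℝ (Fin 2),
    (∀ v, a v ∈ Metric.sphere (0 : EuclideanSpace ℝ (Fin 2)) 1) ∧
    (∀ v, b v ∈ Metric.sphere (0 : EuclideanSpace ℝ (Fin 2)) 1) ∧
    (∀ v, a v ≠ b v) ∧
    ∀ v w : V, v ≠ w →
      (G.Adj v w ↔ (segment ℝ (a v) (b v) ∩ segment ℝ (a w) (b w)).Nonempty)

/-- A circular-arc graph: an intersection graph of arcs of the unit circle, an arc being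
the image of an interval `[s, t]` under the circle parametrization `θ ↦ e^{iθ}`. -/
def IsCircularArcGraph {V : Type} (G : SimpleGraph V) : Prop :=
  ∃ s t : V → ℝ,
    (∀ v, s v ≤ t v) ∧
    ∀ v w : V, v ≠ w →
      (G.Adj v w ↔
        (circleMap 0 1 '' Set.Icc (s v) (t v) ∩
          circleMap 0 1 '' Set.Icc (s w) (t w)).Nonempty)

/-- A weakly chordal graph: neither the graph nor its complement contains an induced cycle
of length at least five, i.e. every such cycle has a chord. -/
def WeaklyChordal {V : Type} (G : SimpleGraph V) : Prop :=
  (∀ (v : V) (c : G.Walk v v), c.IsCycle → 5 ≤ c.length → HasChord G c) ∧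
  (∀ (v : V) (c : Gᶜ.Walk v v), c.IsCycle → 5 ≤ c.length → HasChord Gᶜ c)

/-- The clique number of `G`: the maximum size of a clique. -/
noncomputable def cliqueNumber {V : Type} (G : SimpleGraph V) : ℕ :=
  sSup {n | ∃ S : Set V, G.IsClique S ∧ S.ncard = n}

/-- `C` is a connected component of the graph `G − Ω`. -/
def IsConnCompAvoiding {V : Type} (G : SimpleGraph V) (Ω C : Set V) : Prop :=
  C.Nonempty ∧ C ⊆ Ωᶜ ∧ (G.induce C).Connected ∧
  ∀ u v : V, u ∈ C → v ∈ Ωᶜ → G.Adj u v → v ∈ C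

/-- The `k × k` grid graph. -/
def gridGraph (k : ℕ) : SimpleGraph (Fin k × Fin k) :=
  SimpleGraph.fromRel fun p q =>
    (p.1 = q.1 ∧ p.2.val + 1 = q.2.val) ∨ (p.2 = q.2 ∧ p.1.val + 1 = q.1.val)

/-!
Fix a minimal triangulation `H` of `G` having `Ω` as a maximal clique. Minimality of `H` has a
local consequence: for every clique `S` of `H`, keeping only the edges of `H` inside `S` or
inside `D ∪ N(D)` for a component `D` of `G - S` still gives a chordal supergraph of `G`, so no
edge of `H` is lost. Hence an `H`-edge from `s ∈ S` to `u ∉ S` forces `s ∈ N(D)` for the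
component `D` of `u` in `G - S`.

Two properties of `Ω` follow.
* If `x, y ∈ Ω` are not adjacent in `G`, the fill edge `xy` is the only chord of a `4`-cycle
  `x a y b` of `H`. One of `a, b` lies outside the clique `Ω`, and then `x, y ∈ N(D)` for its
  component `D` of `G - Ω`.
* No component `C` of `G - Ω` has `Ω ⊆ N(C)`. Otherwise, `H` being chordal, some vertex of `C`
  would be adjacent in `H` to the whole clique `Ω`, contradicting maximality.

A minimal separator `S ⊆ Ω` has two full components in `G - S`. By the first property, `Ω \ S`
lies in a single component of `G - S`, so one full component avoids `Ω`; it is then a component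
of `G - Ω` with neighbourhood `S`. Conversely, if `S = N(C)`, then `Ω \ S` is nonempty by the
second property, and `C` together with the component of a vertex of `Ω \ S` are two distinct
full components of `G - S`, the latter by the first property.
-/

namespace SimpleGraph

variable {V : Type} {G : SimpleGraph V} {u v w : V}

lemma Preconnected.exists_walk_of_induce {C : Set V} (hC : (G.induce C).Preconnected) {a b : V}
    (ha : a ∈ C) (hb : b ∈ C) : ∃ p : G.Walk a b, ∀ z ∈ p.support, z ∈ C := by
  obtain ⟨q⟩ := hC ⟨a, ha⟩ ⟨b, hb⟩
  have hq : ∀ z ∈ (q.map (Embedding.induce C).toHom).support, z ∈ C := by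
    simp only [Walk.support_map, List.mem_map]
    rintro _ ⟨z, -, rfl⟩
    exact z.2
  exact ⟨_, hq⟩

namespace Walk

lemma isChordless_reverse {p : G.Walk u v} : p.reverse.IsChordless ↔ p.IsChordless := by
  simp only [isChordless_iff_forall_mem_edges, support_reverse, edges_reverse, List.mem_reverse]

lemma IsChordless.rotate [DecidableEq V] {c : G.Walk v v} (hc : c.IsChordless)
    (hu : u ∈ c.support) : (c.rotate u hu).IsChordless := by
  rw [isChordless_iff_forall_mem_edges] at hc ⊢
  intro a b ha hb hab
  rw [mem_support_rotate_iff] at ha hb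
  exact (c.rotate_edges u hu).perm.mem_iff.2 (hc ha hb hab)

lemma IsChordless.of_cons {h : G.Adj u v} {p : G.Walk v w} (hp : (cons h p).IsPath)
    (hc : (cons h p).IsChordless) : p.IsChordless := by
  rw [isChordless_iff_forall_mem_edges] at hc ⊢
  intro a b ha hb hab
  have hu : u ∉ p.support := ((cons_isPath_iff h p).1 hp).2
  have := hc (List.mem_cons_of_mem _ ha) (List.mem_cons_of_mem _ hb) hab
  rw [edges_cons, List.mem_cons, Sym2.eq_iff] at this
  grind

lemma IsChordless.cons {p : G.Walk v w} (hp : p.IsChordless) (h : G.Adj u v)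
    (hu : ∀ y ∈ p.support, G.Adj u y → y = v) : (cons h p).IsChordless := by
  rw [isChordless_iff_forall_mem_edges] at hp ⊢
  intro a b ha hb hab
  rw [support_cons, List.mem_cons] at ha hb
  rw [edges_cons, List.mem_cons]
  rcases ha with rfl | ha <;> rcases hb with rfl | hb
  · exact absurd hab G.irrefl
  · exact Or.inl (by rw [hu b hb hab])
  · exact Or.inl (by rw [hu a ha hab.symm, Sym2.eq_swap])
  · exact Or.inr (hp ha hb hab)

lemma IsChordless.exists_prepend {q : G.Walk w v} (hq : q.IsPath) (hqc : q.IsChordless)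
    (hu : u ∈ q.support ∨ ∃ y ∈ q.support, G.Adj u y) :
    ∃ r : G.Walk u v, r.IsPath ∧ r.IsChordless ∧ ∀ z ∈ r.support, z = u ∨ z ∈ q.support := by
  induction q with
  | nil =>
    simp only [support_nil, List.mem_singleton, exists_eq_left] at hu
    rcases hu with rfl | hadj
    · exact ⟨nil, by simp, by simp [isChordless_iff_forall_mem_edges], by simp⟩
    · exact ⟨hadj.toWalk, by simp [hadj.ne], hadj.isChordless_toWalk, by simp⟩
  | @cons w w₂ v h q₂ ih =>
    by_cases hu₂ : u ∈ q₂.support ∨ ∃ y ∈ q₂.support, G.Adj u y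
    · obtain ⟨r, hr, hrc, hrs⟩ := ih hq.of_cons (hqc.of_cons hq) hu₂
      exact ⟨r, hr, hrc, fun z hz => (hrs z hz).imp_right (List.mem_cons_of_mem _)⟩
    push Not at hu₂
    simp only [support_cons, List.mem_cons] at hu
    rcases hu with (rfl | hu) | ⟨y, rfl | hy, hadj⟩
    · exact ⟨Walk.cons h q₂, hq, hqc, fun z hz => Or.inr hz⟩
    · exact absurd hu hu₂.1
    · refine ⟨Walk.cons hadj (Walk.cons h q₂), (cons_isPath_iff _ _).2 ⟨hq, ?_⟩,
        hqc.cons hadj fun z hz hz' => ?_, fun z hz => ?_⟩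
      · simpa [hadj.ne] using hu₂.1
      · simp only [support_cons, List.mem_cons] at hz
        exact hz.resolve_right fun hz => hu₂.2 z hz hz'
      · simp only [support_cons, List.mem_cons] at hz ⊢
        tauto
    · exact absurd hadj (hu₂.2 y hy)

lemma exists_isChordless_isPath_to_first (p : G.Walk u v) {P : V → Prop} (hv : P v) :
    ∃ t, P t ∧ ∃ r : G.Walk u t, r.IsPath ∧ r.IsChordless ∧ (∀ z ∈ r.support, z ∈ p.support) ∧
      ∀ z ∈ r.support, P z → z = t := by
  induction p with
  | nil => exact ⟨_, hv, nil, by simp, by simp [isChordless_iff_forall_mem_edges], by simp, by simp⟩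
  | @cons u w v h p ih =>
    by_cases hu : P u
    · exact ⟨u, hu, nil, by simp, by simp [isChordless_iff_forall_mem_edges], by simp, by simp⟩
    obtain ⟨t, ht, r, hr, hrc, hrp, hrP⟩ := ih hv
    obtain ⟨r', hr', hr'c, hr's⟩ := hrc.exists_prepend hr (Or.inr ⟨w, r.start_mem_support, h⟩)
    refine ⟨t, ht, r', hr', hr'c, fun z hz => ?_, fun z hz hPz => ?_⟩
    · rcases hr's z hz with rfl | hz
      · exact (Walk.cons h p).start_mem_support
      · exact List.mem_cons_of_mem _ (hrp z hz)
    · rcases hr's z hz with rfl | hz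
      · exact absurd hPz hu
      · exact hrP z hz hPz

lemma IsCycle.mem_of_mem_support_append {p : G.Walk u v} {q : G.Walk v u}
    (hc : (p.append q).IsCycle) {z : V} (hp : z ∈ p.support) (hq : z ∈ q.support) :
    z = u ∨ z = v := by
  have hnd := hc.support_nodup
  rw [tail_support_append, List.nodup_append] at hnd
  by_contra! hz
  rw [← cons_tail_support, List.mem_cons] at hp hq
  exact hnd.2.2 z (hp.resolve_left hz.1) z (hq.resolve_left hz.2) rfl

lemma exists_mem_support_of_length_eq_two {p : G.Walk u v} (hp : p.length = 2) :
    ∃ w ∈ p.support, G.Adj u w ∧ G.Adj w v := by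
  rcases p with _ | ⟨h, _ | ⟨h', _ | ⟨_, _⟩⟩⟩ <;> simp at hp
  exact ⟨_, by simp, h, h'⟩

end Walk

end SimpleGraph

section Chordal

open SimpleGraph Walk

variable {V : Type} {H : SimpleGraph V}

lemma hasChord_iff_not_isChordless {v : V} {c : H.Walk v v} : HasChord H c ↔ ¬ c.IsChordless := by
  simp [HasChord, isChordless_iff_forall_mem_edges]

lemma Chordal.length_lt_four (hH : Chordal H) {v : V} {c : H.Walk v v} (hc : c.IsCycle)
    (hcl : c.IsChordless) : c.length < 4 := by
  by_contra! h
  exact hasChord_iff_not_isChordless.1 (hH v c hc h) hcl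

lemma Chordal.length_le_one_of_common_adj (hH : Chordal H) {a b x : V} {p : H.Walk a b}
    (hp : p.IsPath) (hc : p.IsChordless) (hx : x ∉ p.support) (hxa : H.Adj x a)
    (hxb : H.Adj x b) (hint : ∀ z ∈ p.support, H.Adj x z → z = a ∨ z = b) : p.length ≤ 1 := by
  by_contra! hlen
  have hab : a ≠ b := by
    rintro rfl
    rw [isPath_iff_nil.1 hp |>.length_eq_zero] at hlen
    omega
  set c := cons hxb.symm (cons hxa p)
  have hcyc : c.IsCycle := by
    refine (cons_isCycle_iff _ _).2 ⟨(cons_isPath_iff _ _).2 ⟨hp, hx⟩, ?_⟩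
    rw [edges_cons, List.mem_cons, Sym2.eq_iff]
    exact fun h => h.elim (by grind) fun he => hx (p.snd_mem_support_of_mem_edges he)
  have hcl : c.IsChordless := by
    rw [isChordless_iff_forall_mem_edges] at hc ⊢
    have hsupp : ∀ y ∈ c.support, y = x ∨ y ∈ p.support := by
      simp only [c, support_cons, List.mem_cons]
      rintro y (rfl | rfl | hy) <;> simp [p.end_mem_support, *]
    have hx_edge : ∀ z ∈ p.support, H.Adj x z → s(x, z) ∈ c.edges := by
      intro z hz hxz
      rcases hint z hz hxz with rfl | rfl <;> simp [c, Sym2.eq_swap]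
    intro y z hy hz hyz
    rcases hsupp y hy with rfl | hy' <;> rcases hsupp z hz with rfl | hz'
    · exact absurd hyz H.irrefl
    · exact hx_edge z hz' hyz
    · rw [Sym2.eq_swap]; exact hx_edge y hy' hyz.symm
    · simp [c, hc hy' hz' hyz]
  have := hH.length_lt_four hcyc hcl
  simp [c] at this
  omega

lemma Chordal.adj_end_of_isChordless (hH : Chordal H) {c t k x : V} {p : H.Walk c t}
    (hp : p.IsPath) (hpc : p.IsChordless) (hk : k ∉ p.support) (hkt : H.Adj k t)
    (hk_only : ∀ z ∈ p.support, H.Adj k z → z = t) (hx : x ∉ p.support) (hxk : H.Adj x k)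
    (hxp : ∃ z ∈ p.support, H.Adj x z) : H.Adj x t := by
  induction p with
  | nil => simpa using hxp
  | @cons c c₂ t h p₂ ih =>
    simp only [support_cons, List.mem_cons, not_or] at hk hx hk_only
    by_cases hx₂ : ∃ z ∈ p₂.support, H.Adj x z
    · exact ih hp.of_cons (hpc.of_cons hp) hk.2 hkt (fun z hz => hk_only z (Or.inr hz)) hx.2 hx₂
    push Not at hx₂
    have hk₂ : k ≠ c₂ := fun h => hk.2 (h ▸ p₂.start_mem_support)
    have hx₂' : x ≠ c₂ := fun h => hx.2 (h ▸ p₂.start_mem_support)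
    have hxc : H.Adj x c := by
      obtain ⟨z, hz, hxz⟩ := hxp
      rcases List.mem_cons.1 hz with rfl | hz
      · exact hxz
      · exact absurd hxz (hx₂ z hz)
    -- `x` sees only the two ends of the chordless path `k t ... c₂ c`, which is too long
    set r := Walk.cons hkt (Walk.cons h p₂).reverse
    have hr : r.IsPath := (cons_isPath_iff _ _).2 ⟨hp.reverse, by simp [hk.1, hk.2, hk₂]⟩
    have hrc : r.IsChordless := (isChordless_reverse.2 hpc).cons hkt fun z hz hkz => by
      simp only [support_reverse, List.mem_reverse, support_cons, List.mem_cons] at hz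
      exact hk_only z hz hkz
    have := hH.length_le_one_of_common_adj hr hrc (by simp [r, hx.1, hx.2, hx₂', hxk.ne]) hxk hxc
      fun z hz hxz => by
        simp only [r, support_cons, support_reverse, List.mem_reverse, List.mem_cons] at hz
        rcases hz with rfl | rfl | hz
        · exact Or.inl rfl
        · exact Or.inr rfl
        · exact absurd hxz (hx₂ z hz)
    simp [r] at this

lemma Chordal.exists_adj_forall_of_isClique (hH : Chordal H) {C K : Set V}
    (hC : (H.induce C).Connected) (hK : K.Finite) (hKc : H.IsClique K) (hKC : Disjoint K C)
    (hdom : ∀ k ∈ K, ∃ c ∈ C, H.Adj k c) : ∃ c ∈ C, ∀ k ∈ K, H.Adj c k := by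
  induction K, hK using Set.Finite.induction_on with
  | empty => exact ⟨_, hC.nonempty.some.2, by simp⟩
  | @insert k K hkK _ ih =>
    obtain ⟨c, hcC, hc⟩ := ih (hKc.subset (Set.subset_insert _ _))
      (hKC.mono_left (Set.subset_insert _ _)) fun j hj => hdom j (Set.mem_insert_of_mem _ hj)
    obtain ⟨c₀, hc₀C, hkc₀⟩ := hdom k (Set.mem_insert _ _)
    obtain ⟨p, hpC⟩ := hC.preconnected.exists_walk_of_induce hcC hc₀C
    obtain ⟨t, hkt, r, hr, hrc, hrp, hr_only⟩ :=
      p.exists_isChordless_isPath_to_first (P := H.Adj k) hkc₀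
    have hrC : ∀ z ∈ r.support, z ∈ C := fun z hz => hpC z (hrp z hz)
    have hKr : ∀ j ∈ insert k K, j ∉ r.support := fun j hj hjr =>
      Set.disjoint_left.1 hKC hj (hrC j hjr)
    refine ⟨t, hrC t r.end_mem_support, fun j hj => ?_⟩
    rcases Set.mem_insert_iff.1 hj with rfl | hjK
    · exact hkt.symm
    refine (hH.adj_end_of_isChordless hr hrc (hKr k (Set.mem_insert _ _)) hkt hr_only
      (hKr j hj) (hKc hj (Set.mem_insert _ _) ?_) ⟨c, r.start_mem_support, (hc j hjK).symm⟩).symm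
    rintro rfl
    exact hkK hjK

/-- Closing the arc `P` with the edge `xy` gives a chordless cycle of `H`. -/
lemma Chordal.length_eq_two_of_deleteEdges (hH : Chordal H) {x y : V} (hxy : H.Adj x y)
    {P : (H.deleteEdges {s(x, y)}).Walk x y} {Q : (H.deleteEdges {s(x, y)}).Walk y x}
    (hc : (P.append Q).IsCycle) (hcl : (P.append Q).IsChordless) : P.length = 2 := by
  have hle : H.deleteEdges {s(x, y)} ≤ H := H.deleteEdges_le _
  have hP : P.IsPath := hc.isPath_of_append_left (not_nil_of_ne hxy.ne.symm)
  have hPe : s(x, y) ∉ P.edges := fun he => by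
    simpa using P.edges_subset_edgeSet he
  set C := cons hxy.symm (P.mapLe hle)
  have hC : C.IsCycle := (cons_isCycle_iff _ _).2
    ⟨hP.mapLe hle, by rw [edges_mapLe_eq_edges, Sym2.eq_swap (a := y)]; exact hPe⟩
  have hCcl : C.IsChordless := by
    rw [isChordless_iff_forall_mem_edges]
    intro u w hu hw huw
    simp only [C, support_cons, support_mapLe_eq_support, List.mem_cons] at hu hw
    replace hu := hu.elim (· ▸ P.end_mem_support) id
    replace hw := hw.elim (· ▸ P.end_mem_support) id
    simp only [C, edges_cons, edges_mapLe_eq_edges, List.mem_cons]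
    by_cases he : s(u, w) = s(x, y)
    · exact Or.inl (by rw [he, Sym2.eq_swap])
    have hmem := hcl.mem_edges ((mem_support_append_iff _ _).2 (Or.inl hu))
      ((mem_support_append_iff _ _).2 (Or.inl hw)) (by simpa [huw] using he)
    rw [edges_append, List.mem_append] at hmem
    refine Or.inr (hmem.resolve_right fun hQ => he ?_)
    have hu' := hc.mem_of_mem_support_append hu (Q.fst_mem_support_of_mem_edges hQ)
    have hw' := hc.mem_of_mem_support_append hw (Q.snd_mem_support_of_mem_edges hQ)
    rcases hu' with rfl | rfl <;> rcases hw' with rfl | rfl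
    all_goals first | exact absurd huw H.irrefl | rfl | exact Sym2.eq_swap
  have hlen := hH.length_lt_four hC hCcl
  have h0 : P.length ≠ 0 := fun h => hxy.ne (length_eq_zero_iff.1 h).eq
  have h1 : P.length ≠ 1 := fun h => by simpa using adj_of_length_eq_one h
  simp only [C, length_cons, length_mapLe] at hlen
  omega

lemma Chordal.exists_common_adj_of_deleteEdges (hH : Chordal H) {x y : V} (hxy : H.Adj x y)
    {P : (H.deleteEdges {s(x, y)}).Walk x y} {Q : (H.deleteEdges {s(x, y)}).Walk y x}
    (hc : (P.append Q).IsCycle) (hcl : (P.append Q).IsChordless) :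
    ∃ a b, H.Adj x a ∧ H.Adj a y ∧ H.Adj x b ∧ H.Adj b y ∧ a ≠ b ∧ ¬ H.Adj a b := by
  have hle : H.deleteEdges {s(x, y)} ≤ H := H.deleteEdges_le _
  have hQ : Q.reverse.length = 2 := by
    refine hH.length_eq_two_of_deleteEdges hxy (Q := P.reverse) ?_ ?_
    · rw [← reverse_append]; exact hc.reverse
    · rw [← reverse_append]; exact isChordless_reverse.2 hcl
  obtain ⟨a, haP, hxa, hay⟩ := exists_mem_support_of_length_eq_two
    (hH.length_eq_two_of_deleteEdges hxy hc hcl)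
  obtain ⟨b, hbQ, hxb, hby⟩ := exists_mem_support_of_length_eq_two hQ
  rw [support_reverse, List.mem_reverse] at hbQ
  have hnotP : ∀ z ∈ P.support, z ∈ Q.support → z ≠ x → z ≠ y → False := fun z hzP hzQ hx hy =>
    (hc.mem_of_mem_support_append hzP hzQ).elim hx hy
  have hab : a ≠ b := by
    rintro rfl
    exact hnotP a haP hbQ hxa.ne' hay.ne
  refine ⟨a, b, hle hxa, hle hay, hle hxb, hle hby, hab, fun hab' => ?_⟩
  have hab'' : (H.deleteEdges {s(x, y)}).Adj a b := by
    simp [hab', hxa.ne', hay.ne]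
  have hmem := hcl.mem_edges ((mem_support_append_iff _ _).2 (Or.inl haP))
    ((mem_support_append_iff _ _).2 (Or.inr hbQ)) hab''
  rw [edges_append, List.mem_append] at hmem
  rcases hmem with h | h
  · exact hnotP b (P.snd_mem_support_of_mem_edges h) hbQ hxb.ne' hby.ne
  · exact hnotP a haP (Q.fst_mem_support_of_mem_edges h) hxa.ne' hay.ne

end Chordal

namespace SimpleGraph

variable {V : Type} {G H : SimpleGraph V} {S T C : Set V} {a u v w : V}

/-- The component of `G - S` containing `a`; it is empty when `a ∈ S`. -/
def componentOf (G : SimpleGraph V) (S : Set V) (a : V) : Set V :=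
  {v | ∃ p : G.Walk a v, ∀ y ∈ p.support, y ∉ S}

def nbhd (G : SimpleGraph V) (C : Set V) : Set V :=
  {v | v ∉ C ∧ ∃ u ∈ C, G.Adj u v}

lemma mem_componentOf_self (ha : a ∉ S) : a ∈ G.componentOf S a :=
  ⟨Walk.nil, by simpa using ha⟩

lemma notMem_of_mem_componentOf (h : v ∈ G.componentOf S a) : v ∉ S := by
  obtain ⟨p, hp⟩ := h
  exact hp v p.end_mem_support

lemma mem_componentOf_of_mem_support (p : G.Walk a v) (hp : ∀ y ∈ p.support, y ∉ S)
    (hw : w ∈ p.support) : w ∈ G.componentOf S a := by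
  classical
  exact ⟨p.takeUntil w hw, fun y hy => hp y (p.support_takeUntil_subset_support hw hy)⟩

lemma mem_componentOf_symm (h : v ∈ G.componentOf S a) : a ∈ G.componentOf S v := by
  obtain ⟨p, hp⟩ := h
  exact ⟨p.reverse, by simpa using hp⟩

lemma mem_componentOf_trans (h : v ∈ G.componentOf S a) (h' : w ∈ G.componentOf S v) :
    w ∈ G.componentOf S a := by
  obtain ⟨p, hp⟩ := h
  obtain ⟨q, hq⟩ := h'
  exact ⟨p.append q, fun y hy => (Walk.mem_support_append_iff p q).1 hy |>.elim (hp y) (hq y)⟩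

lemma componentOf_eq_of_mem (h : v ∈ G.componentOf S a) :
    G.componentOf S v = G.componentOf S a :=
  Set.ext fun _ => ⟨mem_componentOf_trans h, mem_componentOf_trans (mem_componentOf_symm h)⟩

lemma mem_componentOf_of_adj (h : v ∈ G.componentOf S a) (hadj : G.Adj v w) (hw : w ∉ S) :
    w ∈ G.componentOf S a :=
  mem_componentOf_trans h ⟨hadj.toWalk, by simp [notMem_of_mem_componentOf h, hw]⟩

lemma componentOf_mono (hST : S ⊆ T) : G.componentOf T a ⊆ G.componentOf S a :=
  fun _ ⟨p, hp⟩ => ⟨p, fun y hy hyS => hp y hy (hST hyS)⟩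

lemma mem_or_mem_nbhd_of_adj (hu : u ∈ C) (hadj : G.Adj u v) : v ∈ C ∨ v ∈ G.nbhd C :=
  or_iff_not_imp_left.2 fun hv => ⟨hv, u, hu, hadj⟩

lemma nbhd_componentOf_subset : G.nbhd (G.componentOf S a) ⊆ S := fun _ ⟨hv, _, hu, hadj⟩ =>
  by_contra fun hS => hv (mem_componentOf_of_adj hu hadj hS)

lemma Walk.exists_mem_nbhd (p : G.Walk u v) (hu : u ∈ C) (hv : v ∉ C) :
    ∃ x ∈ p.support, x ∈ G.nbhd C := by
  obtain ⟨d, hd, hd₁, hd₂⟩ := p.exists_boundary_dart C hu hv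
  exact ⟨d.snd, p.dart_snd_mem_support_of_mem_darts hd, hd₂, d.fst, hd₁, d.adj⟩

lemma connected_induce_componentOf (ha : a ∉ S) : (G.induce (G.componentOf S a)).Connected := by
  refine induce_connected_of_patches a (mem_componentOf_self ha) fun {v} ⟨p, hp⟩ => ?_
  exact ⟨{z | z ∈ p.support}, fun z hz => mem_componentOf_of_mem_support p hp hz,
    p.start_mem_support, p.end_mem_support, p.connected_induce_support.preconnected _ _⟩

lemma isConnCompAvoiding_componentOf (ha : a ∉ S) :
    IsConnCompAvoiding G S (G.componentOf S a) :=
  ⟨⟨a, mem_componentOf_self ha⟩, fun _ => notMem_of_mem_componentOf,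
    connected_induce_componentOf ha, fun _ _ hu hv hadj => mem_componentOf_of_adj hu hadj hv⟩

def Compatible (G : SimpleGraph V) (S : Set V) (u v : V) : Prop :=
  (u ∈ S ∧ v ∈ S) ∨ ∃ a, u ∈ G.componentOf S a ∪ G.nbhd (G.componentOf S a) ∧
    v ∈ G.componentOf S a ∪ G.nbhd (G.componentOf S a)

lemma Compatible.symm (h : G.Compatible S u v) : G.Compatible S v u :=
  h.imp And.symm fun ⟨a, hu, hv⟩ => ⟨a, hv, hu⟩

lemma compatible_of_adj (h : G.Adj u v) : G.Compatible S u v := by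
  have key : ∀ {u v}, G.Adj u v → u ∉ S → G.Compatible S u v := fun {u v} h hu =>
    Or.inr ⟨u, Or.inl (mem_componentOf_self hu), mem_or_mem_nbhd_of_adj (mem_componentOf_self hu) h⟩
  by_cases hu : u ∈ S
  · by_cases hv : v ∈ S
    · exact Or.inl ⟨hu, hv⟩
    · exact (key h.symm hv).symm
  · exact key h hu

lemma Compatible.mem_nbhd (h : G.Compatible S u w) (hu : u ∈ G.componentOf S a)
    (hw : w ∉ G.componentOf S a) : w ∈ G.nbhd (G.componentOf S a) := by
  have huS := notMem_of_mem_componentOf hu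
  rcases h with ⟨huS', -⟩ | ⟨b, hub, hwb⟩
  · exact absurd huS' huS
  have hub : u ∈ G.componentOf S b := hub.resolve_right fun h => huS (nbhd_componentOf_subset h)
  rw [← componentOf_eq_of_mem hub, componentOf_eq_of_mem hu] at hwb
  exact hwb.resolve_left hw

def compatibleSubgraph (G H : SimpleGraph V) (S : Set V) : SimpleGraph V where
  Adj u v := H.Adj u v ∧ G.Compatible S u v
  symm := ⟨fun _ _ h => ⟨h.1.symm, h.2.symm⟩⟩
  loopless := ⟨fun _ h => H.irrefl h.1⟩

@[simp]
lemma compatibleSubgraph_adj :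
    (G.compatibleSubgraph H S).Adj u v ↔ H.Adj u v ∧ G.Compatible S u v :=
  Iff.rfl

lemma compatibleSubgraph_le : G.compatibleSubgraph H S ≤ H := fun _ _ h => h.1

lemma le_compatibleSubgraph (hGH : G ≤ H) : G ≤ G.compatibleSubgraph H S :=
  fun _ _ h => ⟨hGH h, compatible_of_adj h⟩

lemma exists_mem_nbhd_of_walk_compatibleSubgraph {x : V}
    (p : (G.compatibleSubgraph H S).Walk u x) (hu : u ∈ G.componentOf S a)
    (hx : x ∉ G.componentOf S a ∪ G.nbhd (G.componentOf S a)) :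
    ∃ s ∈ p.support, s ∈ G.nbhd (G.componentOf S a) ∧ s ≠ x := by
  obtain ⟨d, hd, hd₁, hd₂⟩ := p.exists_boundary_dart _ hu fun h => hx (Or.inl h)
  have hs := (compatibleSubgraph_adj.1 d.adj).2.mem_nbhd hd₁ hd₂
  exact ⟨d.snd, p.dart_snd_mem_support_of_mem_darts hd, hs, fun h => hx (Or.inr (h ▸ hs))⟩

/-- Otherwise the cycle leaves `D ∪ N(D)` for the component `D` of one of its vertices outside
`S`, so both of its arcs between these two vertices pass through `N(D) ⊆ S`; as `S` is a clique,
this gives a chord. -/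
lemma Walk.IsCycle.compatible_of_isChordless [DecidableEq V] (hS : H.IsClique S)
    {c : (G.compatibleSubgraph H S).Walk v v} (hc : c.IsCycle) (hcl : c.IsChordless)
    {x y : V} (hx : x ∈ c.support) (hy : y ∈ c.support) : G.Compatible S x y := by
  by_cases hall : ∀ z ∈ c.support, z ∈ S
  · exact Or.inl ⟨hall x hx, hall y hy⟩
  push Not at hall
  obtain ⟨a, ha, haS⟩ := hall
  suffices hsub : ∀ x ∈ c.support, x ∈ G.componentOf S a ∪ G.nbhd (G.componentOf S a) from
    Or.inr ⟨a, hsub x hx, hsub y hy⟩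
  intro x hx
  by_contra hxa
  set c₁ := c.rotate a ha
  have hx₁ : x ∈ c₁.support := (c.mem_support_rotate_iff a ha).2 hx
  set P := c₁.takeUntil x hx₁
  set Q := c₁.dropUntil x hx₁
  have hPQ : P.append Q = c₁ := c₁.take_spec hx₁
  have hcyc : (P.append Q).IsCycle := hPQ ▸ hc.rotate ha
  have hself := mem_componentOf_self (G := G) haS
  obtain ⟨s₁, hs₁P, hs₁, hs₁x⟩ := exists_mem_nbhd_of_walk_compatibleSubgraph P hself hxa
  obtain ⟨s₂, hs₂Q, hs₂, hs₂x⟩ := exists_mem_nbhd_of_walk_compatibleSubgraph Q.reverse hself hxa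
  rw [Walk.support_reverse, List.mem_reverse] at hs₂Q
  have hshared : ∀ z ∈ P.support, z ∈ Q.support → z ∈ S → z = x := fun z hzP hzQ hzS =>
    (hcyc.mem_of_mem_support_append hzP hzQ).resolve_left (by rintro rfl; exact haS hzS)
  have hs₁S := nbhd_componentOf_subset hs₁
  have hs₂S := nbhd_componentOf_subset hs₂
  have hne : s₁ ≠ s₂ := by
    rintro rfl
    exact hs₁x (hshared s₁ hs₁P hs₂Q hs₁S)
  have hmem : ∀ z, z ∈ P.support ∨ z ∈ Q.support → z ∈ c₁.support := fun z hz => by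
    rw [← hPQ]
    exact (Walk.mem_support_append_iff _ _).2 hz
  have hedge : s(s₁, s₂) ∈ (P.append Q).edges :=
    hPQ ▸ (hcl.rotate ha).mem_edges (hmem _ (Or.inl hs₁P)) (hmem _ (Or.inr hs₂Q))
      ⟨hS hs₁S hs₂S hne, Or.inl ⟨hs₁S, hs₂S⟩⟩
  rw [Walk.edges_append, List.mem_append] at hedge
  rcases hedge with h | h
  · exact hs₂x (hshared s₂ (P.snd_mem_support_of_mem_edges h) hs₂Q hs₂S)
  · exact hs₁x (hshared s₁ hs₁P (Q.fst_mem_support_of_mem_edges h) hs₁S)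

lemma chordal_compatibleSubgraph (hH : Chordal H) (hS : H.IsClique S) :
    Chordal (G.compatibleSubgraph H S) := by
  classical
  intro v c hc hlen
  rw [hasChord_iff_not_isChordless]
  intro hcl
  have hclH : (c.mapLe compatibleSubgraph_le).IsChordless := by
    rw [Walk.isChordless_iff_forall_mem_edges, Walk.support_mapLe_eq_support,
      Walk.edges_mapLe_eq_edges]
    exact fun x y hx hy hxy => hcl.mem_edges hx hy ⟨hxy, hc.compatible_of_isChordless hS hcl hx hy⟩
  have := hH.length_lt_four (hc.mapLe compatibleSubgraph_le) hclH
  rw [Walk.length_mapLe] at this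
  omega

end SimpleGraph

open SimpleGraph

section

variable {V : Type} {G H : SimpleGraph V}

lemma IsConnCompAvoiding.eq_componentOf {S C : Set V} (hC : IsConnCompAvoiding G S C) {a : V}
    (ha : a ∈ C) : C = G.componentOf S a := by
  obtain ⟨-, hCS, hconn, hclosed⟩ := hC
  ext v
  constructor
  · intro hv
    obtain ⟨p, hp⟩ := hconn.preconnected.exists_walk_of_induce ha hv
    exact ⟨p, fun y hy => hCS (hp y hy)⟩
  · rintro ⟨p, hp⟩
    induction p with
    | nil => exact ha
    | cons h p ih =>
      simp only [Walk.support_cons, List.mem_cons, forall_eq_or_imp] at hp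
      exact ih (hclosed _ _ ha (hp.2 _ p.start_mem_support) h) hp.2

lemma IsConnCompAvoiding.nbhd_subset {S C : Set V} (hC : IsConnCompAvoiding G S C) :
    G.nbhd C ⊆ S := fun _ ⟨hz, _, hu, huz⟩ =>
  by_contra fun hzS => hz (hC.2.2.2 _ _ hu hzS huz)

lemma IsConnCompAvoiding.subset_componentOf {S Ω D : Set V} (hD : IsConnCompAvoiding G Ω D)
    (hS : S ⊆ Ω) {d : V} (hd : d ∈ D) : D ⊆ G.componentOf S d :=
  hD.eq_componentOf hd ▸ componentOf_mono hS

lemma isConnCompAvoiding_nbhd {C : Set V} (hC : C.Nonempty) (hconn : (G.induce C).Connected) :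
    IsConnCompAvoiding G (G.nbhd C) C :=
  ⟨hC, fun _ hv h => h.1 hv, hconn, fun _ _ hu hw huw => by_contra fun h => hw ⟨h, _, hu, huw⟩⟩

lemma isConnCompAvoiding_componentOf_of_disjoint {S Ω : Set V} (hS : S ⊆ Ω) {a : V} (ha : a ∉ S)
    (hdisj : Disjoint (G.componentOf S a) Ω) : IsConnCompAvoiding G Ω (G.componentOf S a) :=
  ⟨⟨a, mem_componentOf_self ha⟩, fun _ hv hvΩ => Set.disjoint_left.1 hdisj hv hvΩ,
    connected_induce_componentOf ha,
    fun _ _ hu hv huv => mem_componentOf_of_adj hu huv (hv <| hS ·)⟩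

lemma IsMinimalTriangulation.compatibleSubgraph_eq {S : Set V} (hH : IsMinimalTriangulation G H)
    (hS : H.IsClique S) : G.compatibleSubgraph H S = H := by
  by_contra hne
  exact hH.2 _ (le_compatibleSubgraph hH.1.1) (lt_of_le_of_ne compatibleSubgraph_le hne)
    (chordal_compatibleSubgraph hH.1.2 hS)

lemma IsMinimalTriangulation.mem_nbhd_componentOf {S : Set V} (hH : IsMinimalTriangulation G H)
    (hS : H.IsClique S) {s u : V} (hs : s ∈ S) (hu : u ∉ S) (hsu : H.Adj s u) :
    s ∈ G.nbhd (G.componentOf S u) := by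
  have hadj : (G.compatibleSubgraph H S).Adj u s := by
    rw [hH.compatibleSubgraph_eq hS]
    exact hsu.symm
  exact hadj.2.mem_nbhd (mem_componentOf_self hu) fun h => notMem_of_mem_componentOf h hs

/-- A chordless cycle of the non-chordal graph `H - xy` has `xy` as its only chord in `H`. -/
lemma IsMinimalTriangulation.exists_common_adj_not_adj (hH : IsMinimalTriangulation G H)
    {x y : V} (hxy : H.Adj x y) (hG : ¬ G.Adj x y) :
    ∃ a b, H.Adj x a ∧ H.Adj a y ∧ H.Adj x b ∧ H.Adj b y ∧ a ≠ b ∧ ¬ H.Adj a b := by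
  classical
  set H' := H.deleteEdges {s(x, y)}
  have hle : H' ≤ H := H.deleteEdges_le _
  have hGH' : G ≤ H' := fun u v h => by
    refine deleteEdges_adj.2 ⟨hH.1.1 h, fun he => hG ?_⟩
    rcases Sym2.eq_iff.1 (Set.mem_singleton_iff.1 he) with ⟨rfl, rfl⟩ | ⟨rfl, rfl⟩
    exacts [h, h.symm]
  have hlt : H' < H := lt_of_le_of_ne hle fun h => by
    have h' : H'.Adj x y := by rw [h]; exact hxy
    simp [H'] at h'
  have hnc := hH.2 H' hGH' hlt
  simp only [Chordal, not_forall, hasChord_iff_not_isChordless, not_not] at hnc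
  obtain ⟨v, c, hc, hlen, hcl⟩ := hnc
  obtain ⟨u, w, hu, hw, huw, hne⟩ := hH.1.2 v (c.mapLe hle) (hc.mapLe hle) (by simpa using hlen)
  rw [Walk.support_mapLe_eq_support] at hu hw
  rw [Walk.edges_mapLe_eq_edges] at hne
  have hchord : s(u, w) = s(x, y) := by
    by_contra h
    exact hne (hcl.mem_edges hu hw (deleteEdges_adj.2 ⟨huw, h⟩))
  have hxy_mem : x ∈ c.support ∧ y ∈ c.support := by
    rcases Sym2.eq_iff.1 hchord with ⟨rfl, rfl⟩ | ⟨rfl, rfl⟩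
    exacts [⟨hu, hw⟩, ⟨hw, hu⟩]
  set c₁ := c.rotate x hxy_mem.1
  have hy : y ∈ c₁.support := (c.mem_support_rotate_iff x _).2 hxy_mem.2
  have hc₁ : c₁.IsCycle := hc.rotate _
  have hcl₁ : c₁.IsChordless := hcl.rotate _
  rw [← c₁.take_spec hy] at hc₁ hcl₁
  exact hH.1.2.exists_common_adj_of_deleteEdges hxy hc₁ hcl₁

lemma IsPotentialMaximalClique.exists_isConnCompAvoiding_mem_nbhd {Ω : Set V}
    (hΩ : IsPotentialMaximalClique G Ω) {x y : V} (hx : x ∈ Ω) (hy : y ∈ Ω) (hxy : x ≠ y)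
    (hG : ¬ G.Adj x y) : ∃ C, IsConnCompAvoiding G Ω C ∧ x ∈ G.nbhd C ∧ y ∈ G.nbhd C := by
  obtain ⟨H, hH, hΩH⟩ := hΩ
  obtain ⟨a, b, hxa, hay, hxb, hby, hab, hnab⟩ :=
    hH.exists_common_adj_not_adj (hΩH.1 hx hy hxy) hG
  have key : ∀ c ∉ Ω, H.Adj x c → H.Adj c y →
      ∃ C, IsConnCompAvoiding G Ω C ∧ x ∈ G.nbhd C ∧ y ∈ G.nbhd C := fun c hc hxc hcy =>
    ⟨G.componentOf Ω c, isConnCompAvoiding_componentOf hc,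
      hH.mem_nbhd_componentOf hΩH.1 hx hc hxc, hH.mem_nbhd_componentOf hΩH.1 hy hc hcy.symm⟩
  by_cases ha : a ∈ Ω
  · exact key b (fun hb => hnab (hΩH.1 ha hb hab)) hxb hby
  · exact key a ha hxa hay

lemma IsPotentialMaximalClique.exists_mem_notMem_nbhd [Finite V] {Ω C : Set V}
    (hΩ : IsPotentialMaximalClique G Ω) (hC : IsConnCompAvoiding G Ω C) :
    ∃ v ∈ Ω, v ∉ G.nbhd C := by
  obtain ⟨H, hH, hΩH⟩ := hΩ
  by_contra! hfull
  obtain ⟨c, hcC, hc⟩ := hH.1.2.exists_adj_forall_of_isClique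
    (hC.2.2.1.mono fun _ _ h => hH.1.1 h) (Set.toFinite Ω) hΩH.1
    (Set.disjoint_left.2 fun v hv hvC => hC.2.1 hvC hv) fun k hk =>
      let ⟨_, c, hc, hck⟩ := hfull k hk
      ⟨c, hc, (hH.1.1 hck).symm⟩
  have hins := hΩH.2 _ (hΩH.1.insert fun k hk _ => hc k hk) (Set.subset_insert c Ω)
  exact hC.2.1 hcC (hins ▸ Set.mem_insert c Ω)

lemma IsPotentialMaximalClique.mem_componentOf_or_nbhd {Ω S : Set V}
    (hΩ : IsPotentialMaximalClique G Ω) (hS : S ⊆ Ω) {x y : V} (hx : x ∈ Ω) (hy : y ∈ Ω)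
    (hxy : x ≠ y) (hyS : y ∉ S) :
    x ∈ G.componentOf S y ∨ x ∈ G.nbhd (G.componentOf S y) := by
  by_cases hadj : G.Adj y x
  · exact mem_or_mem_nbhd_of_adj (mem_componentOf_self hyS) hadj
  obtain ⟨D, hD, ⟨-, d, hd, hdx⟩, ⟨-, e, he, hey⟩⟩ :=
    hΩ.exists_isConnCompAvoiding_mem_nbhd hx hy hxy (fun h => hadj h.symm)
  have hDy : D ⊆ G.componentOf S y := by
    rw [← componentOf_eq_of_mem (mem_componentOf_of_adj (mem_componentOf_self hyS) hey.symm
      fun h => hD.2.1 he (hS h))]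
    exact hD.subset_componentOf hS he
  exact mem_or_mem_nbhd_of_adj (hDy hd) hdx

lemma IsPotentialMaximalClique.mem_componentOf {Ω S : Set V} (hΩ : IsPotentialMaximalClique G Ω)
    (hS : S ⊆ Ω) {x y : V} (hx : x ∈ Ω) (hxS : x ∉ S) (hy : y ∈ Ω) (hyS : y ∉ S) :
    x ∈ G.componentOf S y := by
  obtain rfl | hxy := eq_or_ne x y
  · exact mem_componentOf_self hyS
  exact (hΩ.mem_componentOf_or_nbhd hS hx hy hxy hyS).resolve_right
    fun h => hxS (nbhd_componentOf_subset h)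

lemma IsSeparator.symm {S : Set V} {u v : V} (h : IsSeparator G u v S) : IsSeparator G v u S :=
  ⟨h.2.1, h.1, fun p => by simpa using h.2.2 p.reverse⟩

lemma IsSeparator.notMem_componentOf {S : Set V} {u v : V} (h : IsSeparator G u v S) :
    v ∉ G.componentOf S u := fun ⟨p, hp⟩ =>
  let ⟨x, hx, hxS⟩ := h.2.2 p
  hp x hx hxS

lemma IsSeparator.subset_nbhd_componentOf {S : Set V} {u v : V} (hS : IsSeparator G u v S)
    (hmin : ∀ S' : Set V, S' ⊂ S → ¬ IsSeparator G u v S') :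
    S ⊆ G.nbhd (G.componentOf S u) := by
  classical
  intro s hs
  obtain ⟨p, hp⟩ : ∃ p : G.Walk u v, ∀ x ∈ p.support, x ∈ S → x = s := by
    have h := hmin (S \ {s}) (Set.sdiff_singleton_ssubset.2 hs)
    simp only [IsSeparator, not_and, not_forall, not_exists] at h
    obtain ⟨p, hp⟩ := h (fun h => hS.1 h.1) (fun h => hS.2.1 h.1)
    exact ⟨p, fun x hx hxS => by_contra fun h => hp x hx ⟨hxS, h⟩⟩
  obtain ⟨x, hx, hxS⟩ := hS.2.2 p
  obtain rfl := hp x hx hxS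
  obtain ⟨z, hz, hzN⟩ := (p.takeUntil x hx).exists_mem_nbhd (mem_componentOf_self hS.1)
    fun h => notMem_of_mem_componentOf h hxS
  rwa [hp z (p.support_takeUntil_subset_support hx hz) (nbhd_componentOf_subset hzN)] at hzN

lemma IsSeparator.exists_isConnCompAvoiding_nbhd_eq {S Ω : Set V} {u v : V}
    (hsep : IsSeparator G u v S) (hmin : ∀ S' : Set V, S' ⊂ S → ¬ IsSeparator G u v S')
    (hS : S ⊆ Ω) (hdisj : Disjoint (G.componentOf S u) Ω) :
    ∃ C, IsConnCompAvoiding G Ω C ∧ S = G.nbhd C :=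
  ⟨_, isConnCompAvoiding_componentOf_of_disjoint hS hsep.1 hdisj,
    (hsep.subset_nbhd_componentOf hmin).antisymm nbhd_componentOf_subset⟩

lemma isMinimalSeparator_of_full {S C D : Set V} (hC : IsConnCompAvoiding G S C)
    (hD : IsConnCompAvoiding G S D) (hCD : C ≠ D) (hCS : S ⊆ G.nbhd C) (hDS : S ⊆ G.nbhd D) :
    IsMinimalSeparator G S := by
  obtain ⟨u, hu⟩ := hC.1
  obtain ⟨v, hv⟩ := hD.1
  have hvC : v ∉ C := fun h => hCD (by rw [hC.eq_componentOf h, hD.eq_componentOf hv])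
  have huS : u ∉ S := hC.2.1 hu
  have hvS : v ∉ S := hD.2.1 hv
  refine ⟨u, v, fun h => hvC (h ▸ hu), fun h => hvC (hC.2.2.2 u v hu hvS h),
    ⟨huS, hvS, fun p => ?_⟩, fun S' hS' hsep => ?_⟩
  · obtain ⟨x, hx, hxN⟩ := p.exists_mem_nbhd hu hvC
    exact ⟨x, hx, hC.nbhd_subset hxN⟩
  obtain ⟨s, hs, hsS'⟩ := Set.exists_of_ssubset hS'
  obtain ⟨-, c, hc, hcs⟩ := hCS hs
  obtain ⟨-, d, hd, hds⟩ := hDS hs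
  obtain ⟨p₁, hp₁⟩ : c ∈ G.componentOf S u := hC.eq_componentOf hu ▸ hc
  obtain ⟨p₂, hp₂⟩ : v ∈ G.componentOf S d := hD.eq_componentOf hd ▸ hv
  obtain ⟨x, hx, hxS'⟩ := hsep.2.2 (p₁.append (Walk.cons hcs (Walk.cons hds.symm p₂)))
  simp only [Walk.mem_support_append_iff, Walk.support_cons, List.mem_cons] at hx
  rcases hx with hx | rfl | rfl | hx
  · exact hp₁ x hx (hS'.1 hxS')
  · exact hp₁ x p₁.end_mem_support (hS'.1 hxS')
  · exact hsS' hxS'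
  · exact hp₂ x hx (hS'.1 hxS')

end

/-- Bouchitté–Todinca: for a potential maximal clique `Ω` of `G`, a subset `S ⊆ Ω` is a
minimal separator of `G` iff `S` is the neighborhood of some connected component of `G − Ω`. -/
theorem stmt_18 {V : Type} [Fintype V] (G : SimpleGraph V) (Ω : Set V)
    (hΩ : IsPotentialMaximalClique G Ω) (S : Set V) (hS : S ⊆ Ω) :
    IsMinimalSeparator G S ↔
      ∃ C : Set V, IsConnCompAvoiding G Ω C ∧
        S = {v : V | v ∉ C ∧ ∃ u ∈ C, G.Adj u v} := by
  constructor
  · rintro ⟨u, v, -, -, hsep, hmin⟩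
    by_cases hu : Disjoint (G.componentOf S u) Ω
    · exact hsep.exists_isConnCompAvoiding_nbhd_eq hmin hS hu
    obtain ⟨a, ha, haΩ⟩ := Set.not_disjoint_iff.1 hu
    refine hsep.symm.exists_isConnCompAvoiding_nbhd_eq (fun S' h h' => hmin S' h h'.symm) hS
      (Set.disjoint_left.2 fun b hb hbΩ => hsep.notMem_componentOf ?_)
    have hba := hΩ.mem_componentOf hS hbΩ (notMem_of_mem_componentOf hb) haΩ
      (notMem_of_mem_componentOf ha)
    exact mem_componentOf_trans ha (mem_componentOf_trans hba (mem_componentOf_symm hb))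
  · rintro ⟨C, hC, rfl⟩
    obtain ⟨v, hvΩ, hvN⟩ := hΩ.exists_mem_notMem_nbhd hC
    refine isMinimalSeparator_of_full (isConnCompAvoiding_nbhd hC.1 hC.2.2.1)
      (isConnCompAvoiding_componentOf hvN) (fun h => hC.2.1 (h ▸ mem_componentOf_self hvN) hvΩ)
      subset_rfl fun s hs => ?_
    exact (hΩ.mem_componentOf_or_nbhd hC.nbhd_subset (hC.nbhd_subset hs) hvΩ
      (fun h => hvN (h ▸ hs)) hvN).resolve_left fun h => notMem_of_mem_componentOf h hs
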